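/- Let k be an algebraically closed field and V a 2-dimensional k-vector space with basis {x, y}. For every 3-dimensional subspace R of V ⊗ V there exists g ∈ GL(V) such that (g ⊗ g)(R) is one of the following subspaces: span{x⊗x, x⊗y, y⊗x}; span{x⊗x, y⊗y, x⊗y − q·(y⊗x)} for some q ∈ k; span{x⊗x, x⊗y + y⊗x, x⊗y + y⊗y}. -/

import Mathlib

/-!
A 3-dimensional subspace `R` of the 4-dimensional space `V ⊗ V` is the kernel of a nonzero
functional on `V ⊗ V`, that is, of a nonzero bilinear form on `V`, unique up to a scalar; and
`g ⊗ g` acts on its Gram matrix `F` by congruence `F ↦ Qᵀ F Q`. Over an algebraically closed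
field the quadratic form `v ↦ F(v, v)` has an isotropic vector, so we may assume `F₀₀ = 0`;
a shear, a swap or a diagonal scaling then brings `F`, up to a scalar, to one of
`!![0, 0; 0, 1]`, `!![0, q; 1, 0]`, `!![0, 1; -1, -1]`, whose kernels are the three listed
subspaces.
-/

open Matrix
open scoped TensorProduct

section Functional

variable {k W : Type*} [Field k] [AddCommGroup W] [Module k W]

theorem LinearMap.ker_eq_span_of_span_insert_eq_top (φ : W →ₗ[k] k) {S : Set W} {z : W}
    (hS : S ⊆ LinearMap.ker φ) (hz : φ z ≠ 0)
    (htop : Submodule.span k (insert z S) = ⊤) : LinearMap.ker φ = Submodule.span k S := by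
  refine le_antisymm (fun t ht => ?_) (Submodule.span_le.mpr hS)
  obtain ⟨a, s, hs, rfl⟩ := Submodule.mem_span_insert.mp (htop ▸ Submodule.mem_top : t ∈ _)
  have hs0 : φ s = 0 := Submodule.span_le.mpr hS hs
  rw [LinearMap.mem_ker, map_add, map_smul, hs0, add_zero, smul_eq_mul, mul_eq_zero] at ht
  rwa [ht.resolve_right hz, zero_smul, zero_add]

theorem Submodule.exists_ker_eq_of_finrank_add_one [FiniteDimensional k W] (R : Submodule k W)
    (hR : Module.finrank k R + 1 = Module.finrank k W) :
    ∃ f : W →ₗ[k] k, f ≠ 0 ∧ LinearMap.ker f = R := by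
  have hq : Module.finrank k (W ⧸ R) = Module.finrank k k := by
    have := R.finrank_quotient_add_finrank
    rw [Module.finrank_self]; omega
  let f := (LinearEquiv.ofFinrankEq _ _ hq).toLinearMap ∘ₗ R.mkQ
  have hker : LinearMap.ker f = R := by
    rw [LinearMap.ker_comp, LinearEquiv.ker, Submodule.comap_bot, Submodule.ker_mkQ]
  refine ⟨f, fun hf => ?_, hker⟩
  rw [hf, LinearMap.ker_zero] at hker
  rw [← hker, finrank_top] at hR
  omega

end Functional

theorem Submodule.eq_top_of_tmul_basis_mem {k V n : Type*} [Field k] [AddCommGroup V] [Module k V]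
    (b : Module.Basis n k V) (W : Submodule k (V ⊗[k] V)) (h : ∀ i j, b i ⊗ₜ b j ∈ W) : W = ⊤ := by
  rw [eq_top_iff, ← (b.tensorProduct b).span_eq, Submodule.span_le]
  rintro _ ⟨⟨i, j⟩, rfl⟩
  simpa using h i j

section ProjCongr

variable {k n : Type*} [Field k] [Fintype n] [DecidableEq n]

def Matrix.ProjCongr (F G : Matrix n n k) : Prop :=
  ∃ Q : Matrix n n k, IsUnit Q.det ∧ ∃ c : k, c ≠ 0 ∧ Qᵀ * F * Q = c • G

namespace Matrix.ProjCongr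

variable {F G H : Matrix n n k}

theorem trans (hFG : F.ProjCongr G) (hGH : G.ProjCongr H) : F.ProjCongr H := by
  obtain ⟨P, hP, c, hc, hPFG⟩ := hFG
  obtain ⟨Q, hQ, d, hd, hQGH⟩ := hGH
  refine ⟨P * Q, by simpa using hP.mul hQ, c * d, mul_ne_zero hc hd, ?_⟩
  calc (P * Q)ᵀ * F * (P * Q) = Qᵀ * (Pᵀ * F * P) * Q := by
        simp only [transpose_mul, Matrix.mul_assoc]
    _ = (c * d) • H := by
        rw [hPFG, Matrix.mul_smul, Matrix.smul_mul, hQGH, smul_smul]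

theorem of_congr {Q : Matrix n n k} (hQ : IsUnit Q.det) (h : Qᵀ * F * Q = G) :
    F.ProjCongr G :=
  ⟨Q, hQ, 1, one_ne_zero, by rw [h, one_smul]⟩

theorem of_eq_smul {c : k} (hc : c ≠ 0) (h : F = c • G) : F.ProjCongr G :=
  ⟨1, by simp, c, hc, by simpa using h⟩

theorem ne_zero (h : F.ProjCongr G) (hF : F ≠ 0) : G ≠ 0 := by
  obtain ⟨Q, hQ, c, -, hQFG⟩ := h
  rintro rfl
  have hQ' : IsUnit Q := (isUnit_iff_isUnit_det Q).mpr hQ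
  have hQt : IsUnit Qᵀ := (isUnit_iff_isUnit_det Qᵀ).mpr (by rwa [det_transpose])
  rw [smul_zero, hQ'.mul_left_eq_zero, hQt.mul_right_eq_zero] at hQFG
  exact hF hQFG

end Matrix.ProjCongr

end ProjCongr

section TwoByTwo

variable {k : Type*} [Field k]

theorem Matrix.projCongr_antidiag {b c : k} (h : !![0, b; c, 0] ≠ 0) :
    ∃ q, (!![0, b; c, 0]).ProjCongr !![0, q; 1, 0] := by
  by_cases hc : c = 0
  · subst hc
    have hb : b ≠ 0 := by
      rintro rfl
      exact h (ext fun i j => by fin_cases i <;> fin_cases j <;> rfl)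
    refine ⟨0, !![0, 1; 1, 0], by simp [det_fin_two_of], b, hb, ?_⟩
    ext i j; fin_cases i <;> fin_cases j <;> simp [mul_apply, Fin.sum_univ_two]
  · exact ⟨b / c, .of_eq_smul hc (by ext i j; fin_cases i <;> fin_cases j <;> simp [field])⟩

theorem Matrix.projCongr_normalForm_of_zero_zero {b c e : k} (h : !![0, b; c, e] ≠ 0) :
    (!![0, b; c, e]).ProjCongr !![0, 0; 0, 1] ∨
      (∃ q, (!![0, b; c, e]).ProjCongr !![0, q; 1, 0]) ∨
      (!![0, b; c, e]).ProjCongr !![0, 1; -1, -1] := by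
  by_cases hbc : b + c = 0
  · obtain rfl : c = -b := by linear_combination hbc
    by_cases he : e = 0
    · subst he
      exact Or.inr (Or.inl (projCongr_antidiag h))
    by_cases hb : b = 0
    · subst hb
      refine Or.inl (.of_eq_smul he ?_)
      ext i j; fin_cases i <;> fin_cases j <;> simp
    · refine Or.inr (Or.inr ⟨!![e, 0; 0, -b], by simp [det_fin_two_of, he, hb], -(e * b ^ 2),
        by simp [he, hb], ?_⟩)
      ext i j; fin_cases i <;> fin_cases j <;> simp [mul_apply, Fin.sum_univ_two] <;> ring
  · have hshear : (!![0, b; c, e]).ProjCongr !![0, b; c, 0] := by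
      refine .of_congr (Q := !![1, -e / (b + c); 0, 1]) (by simp [det_fin_two_of]) ?_
      ext i j; fin_cases i <;> fin_cases j <;> simp [mul_apply, Fin.sum_univ_two]
      field_simp; ring
    obtain ⟨q, hq⟩ := projCongr_antidiag (hshear.ne_zero h)
    exact Or.inr (Or.inl ⟨q, hshear.trans hq⟩)

theorem Matrix.exists_projCongr_zero_zero [IsAlgClosed k] (F : Matrix (Fin 2) (Fin 2) k) :
    ∃ b c e : k, F.ProjCongr !![0, b; c, e] := by
  by_cases hF : F 1 1 = 0
  · refine ⟨F 1 0, F 0 1, F 0 0, .of_congr (Q := !![0, 1; 1, 0]) (by simp [det_fin_two_of]) ?_⟩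
    ext i j; fin_cases i <;> fin_cases j <;> simp [mul_apply, Fin.sum_univ_two, hF]
  · obtain ⟨s, hs⟩ := IsAlgClosed.exists_root
      (Polynomial.C (F 1 1) * Polynomial.X ^ 2 + Polynomial.C (F 0 1 + F 1 0) * Polynomial.X +
        Polynomial.C (F 0 0))
      (by rw [Polynomial.degree_quadratic hF]; exact two_ne_zero)
    refine ⟨F 0 1 + s * F 1 1, F 1 0 + s * F 1 1, F 1 1,
      .of_congr (Q := !![1, 0; s, 1]) (by simp [det_fin_two_of]) ?_⟩
    simp only [Polynomial.IsRoot, Polynomial.eval_add, Polynomial.eval_mul, Polynomial.eval_C,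
      Polynomial.eval_pow, Polynomial.eval_X] at hs
    ext i j; fin_cases i <;> fin_cases j <;> simp [mul_apply, Fin.sum_univ_two]
    · linear_combination hs
    · ring

theorem Matrix.projCongr_normalForm [IsAlgClosed k] {F : Matrix (Fin 2) (Fin 2) k} (hF : F ≠ 0) :
    F.ProjCongr !![0, 0; 0, 1] ∨ (∃ q, F.ProjCongr !![0, q; 1, 0]) ∨
      F.ProjCongr !![0, 1; -1, -1] := by
  obtain ⟨b, c, e, h⟩ := exists_projCongr_zero_zero F
  rcases projCongr_normalForm_of_zero_zero (h.ne_zero hF) with h' | ⟨q, h'⟩ | h'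
  exacts [Or.inl (h.trans h'), Or.inr (Or.inl ⟨q, h.trans h'⟩), Or.inr (Or.inr (h.trans h'))]

end TwoByTwo

section Tensor

variable {k V n : Type*} [Field k] [AddCommGroup V] [Module k V] [Fintype n] [DecidableEq n]
  (b : Module.Basis n k V)

noncomputable def Module.Basis.tensorGramMatrix : (V ⊗[k] V →ₗ[k] k) ≃ₗ[k] Matrix n n k :=
  (TensorProduct.lift.equiv (RingHom.id k) V V k).symm ≪≫ₗ LinearMap.toMatrix₂ b b

namespace Module.Basis

@[simp]
theorem tensorGramMatrix_apply (f : V ⊗[k] V →ₗ[k] k) (i j : n) :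
    b.tensorGramMatrix f i j = f (b i ⊗ₜ b j) := by
  simp [tensorGramMatrix, TensorProduct.lift.equiv]

@[simp]
theorem tensorGramMatrix_symm_apply_tmul (F : Matrix n n k) (i j : n) :
    b.tensorGramMatrix.symm F (b i ⊗ₜ b j) = F i j := by
  rw [← tensorGramMatrix_apply, LinearEquiv.apply_symm_apply]

theorem tensorGramMatrix_comp_map (f : V ⊗[k] V →ₗ[k] k) (Q : Matrix n n k) :
    b.tensorGramMatrix (f ∘ₗ TensorProduct.map (toLin b b Q) (toLin b b Q)) =
      Qᵀ * b.tensorGramMatrix f * Q := by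
  let curry := (TensorProduct.lift.equiv (RingHom.id k) V V k).symm
  have : curry (f ∘ₗ TensorProduct.map (toLin b b Q) (toLin b b Q)) =
      (curry f).compl₁₂ (toLin b b Q) (toLin b b Q) := by
    ext; simp [curry, TensorProduct.lift.equiv]
  change LinearMap.toMatrix₂ b b (curry _) = Qᵀ * LinearMap.toMatrix₂ b b (curry f) * Q
  rw [this, LinearMap.toMatrix₂_compl₁₂ b b b b, LinearMap.toMatrix_toLin]

theorem exists_map_ker_eq_of_projCongr {f : V ⊗[k] V →ₗ[k] k} {G : Matrix n n k}
    (h : (b.tensorGramMatrix f).ProjCongr G) :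
    ∃ g : V ≃ₗ[k] V, (LinearMap.ker f).map (TensorProduct.map g.toLinearMap g.toLinearMap) =
      LinearMap.ker (b.tensorGramMatrix.symm G) := by
  obtain ⟨Q, hQ, c, hc, hQfG⟩ := h
  let e : V ≃ₗ[k] V :=
    LinearEquiv.ofIsUnitDet (v := b) (v' := b) (f := toLin b b Q) (by simpa using hQ)
  have hfe : f ∘ₗ TensorProduct.map e.toLinearMap e.toLinearMap = c • b.tensorGramMatrix.symm G :=
    b.tensorGramMatrix.injective (by
      rw [LinearEquiv.map_smul, LinearEquiv.apply_symm_apply, ← hQfG]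
      exact tensorGramMatrix_comp_map b f Q)
  refine ⟨e.symm, ?_⟩
  rw [← LinearMap.ker_smul (b.tensorGramMatrix.symm G) c hc, ← hfe, LinearMap.ker_comp]
  exact Submodule.map_equiv_eq_comap_symm (TensorProduct.congr e.symm e.symm) _

end Module.Basis

end Tensor

section NormalForms

variable {k V : Type*} [Field k] [AddCommGroup V] [Module k V] (b : Module.Basis (Fin 2) k V)

open Submodule

theorem Module.Basis.ker_tensorGramMatrix_symm_normalForm₁ :
    LinearMap.ker (b.tensorGramMatrix.symm !![0, 0; 0, 1]) =
      span k {b 0 ⊗ₜ[k] b 0, b 0 ⊗ₜ[k] b 1, b 1 ⊗ₜ[k] b 0} := by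
  refine LinearMap.ker_eq_span_of_span_insert_eq_top _ (z := b 1 ⊗ₜ b 1)
    (by simp [Set.insert_subset_iff]) (by simp) (eq_top_of_tmul_basis_mem b _ fun i j => ?_)
  fin_cases i <;> fin_cases j <;> exact subset_span (by simp)

theorem Module.Basis.ker_tensorGramMatrix_symm_normalForm₂ (q : k) :
    LinearMap.ker (b.tensorGramMatrix.symm !![0, q; 1, 0]) =
      span k {b 0 ⊗ₜ[k] b 0, b 1 ⊗ₜ[k] b 1, b 0 ⊗ₜ[k] b 1 - q • (b 1 ⊗ₜ[k] b 0)} := by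
  refine LinearMap.ker_eq_span_of_span_insert_eq_top _ (z := b 1 ⊗ₜ b 0)
    (by simp [Set.insert_subset_iff]) (by simp) (eq_top_of_tmul_basis_mem b _ ?_)
  simp only [Fin.forall_fin_two]
  refine ⟨⟨subset_span (by simp), ?_⟩, subset_span (by simp), subset_span (by simp)⟩
  exact (sub_mem_iff_left (y := q • (b 1 ⊗ₜ[k] b 0)) _ (smul_mem _ q (subset_span (by simp)))).mp
    (subset_span (by simp))

theorem Module.Basis.ker_tensorGramMatrix_symm_normalForm₃ :
    LinearMap.ker (b.tensorGramMatrix.symm !![0, 1; -1, -1]) =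
      span k {b 0 ⊗ₜ[k] b 0, b 0 ⊗ₜ[k] b 1 + b 1 ⊗ₜ[k] b 0, b 0 ⊗ₜ[k] b 1 + b 1 ⊗ₜ[k] b 1} := by
  refine LinearMap.ker_eq_span_of_span_insert_eq_top _ (z := b 0 ⊗ₜ b 1)
    (by simp [Set.insert_subset_iff]) (by simp) (eq_top_of_tmul_basis_mem b _ ?_)
  simp only [Fin.forall_fin_two]
  have h01 : b 0 ⊗ₜ[k] b 1 ∈ span k (insert (b 0 ⊗ₜ[k] b 1)
      {b 0 ⊗ₜ[k] b 0, b 0 ⊗ₜ[k] b 1 + b 1 ⊗ₜ[k] b 0, b 0 ⊗ₜ[k] b 1 + b 1 ⊗ₜ[k] b 1}) :=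
    subset_span (by simp)
  exact ⟨⟨subset_span (by simp), h01⟩, (add_mem_cancel_left h01).mp (subset_span (by simp)),
    (add_mem_cancel_left h01).mp (subset_span (by simp))⟩

end NormalForms

/-- Let `k` be an algebraically closed field and `V` a 2-dimensional
`k`-vector space with basis `{x, y}` (here `x = b 0`, `y = b 1`).  Every 3-dimensional
subspace `R` of `V ⊗ V` can be moved by some `g ∈ GL(V)` (acting as `g ⊗ g`) onto one of:
`span{x⊗x, x⊗y, y⊗x}`, `span{x⊗x, y⊗y, x⊗y − q·(y⊗x)}` for some `q ∈ k`, or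
`span{x⊗x, x⊗y + y⊗x, x⊗y + y⊗y}`. -/
theorem stmt2 (k V : Type) [Field k] [IsAlgClosed k] [AddCommGroup V] [Module k V]
    (b : Module.Basis (Fin 2) k V) (R : Submodule k (V ⊗[k] V)) (hR : Module.finrank k R = 3) :
    ∃ g : V ≃ₗ[k] V,
      Submodule.map (TensorProduct.map g.toLinearMap g.toLinearMap) R =
          Submodule.span k {b 0 ⊗ₜ[k] b 0, b 0 ⊗ₜ[k] b 1, b 1 ⊗ₜ[k] b 0} ∨
      (∃ q : k, Submodule.map (TensorProduct.map g.toLinearMap g.toLinearMap) R =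
          Submodule.span k {b 0 ⊗ₜ[k] b 0, b 1 ⊗ₜ[k] b 1, b 0 ⊗ₜ[k] b 1 - q • (b 1 ⊗ₜ[k] b 0)}) ∨
      Submodule.map (TensorProduct.map g.toLinearMap g.toLinearMap) R =
          Submodule.span k {b 0 ⊗ₜ[k] b 0, b 0 ⊗ₜ[k] b 1 + b 1 ⊗ₜ[k] b 0,
            b 0 ⊗ₜ[k] b 1 + b 1 ⊗ₜ[k] b 1} := by
  have : FiniteDimensional k V := b.finiteDimensional_of_finite
  have hdim : Module.finrank k R + 1 = Module.finrank k (V ⊗[k] V) := by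
    rw [hR, Module.finrank_tensorProduct, Module.finrank_eq_card_basis b, Fintype.card_fin]
  obtain ⟨f, hf, rfl⟩ := R.exists_ker_eq_of_finrank_add_one hdim
  rcases Matrix.projCongr_normalForm (b.tensorGramMatrix.map_ne_zero_iff.mpr hf)
    with h | ⟨q, h⟩ | h
  · obtain ⟨g, hg⟩ := b.exists_map_ker_eq_of_projCongr h
    exact ⟨g, Or.inl (hg.trans b.ker_tensorGramMatrix_symm_normalForm₁)⟩
  · obtain ⟨g, hg⟩ := b.exists_map_ker_eq_of_projCongr h
    exact ⟨g, Or.inr (Or.inl ⟨q, hg.trans (b.ker_tensorGramMatrix_symm_normalForm₂ q)⟩)⟩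
  · obtain ⟨g, hg⟩ := b.exists_map_ker_eq_of_projCongr h
    exact ⟨g, Or.inr (Or.inr (hg.trans b.ker_tensorGramMatrix_symm_normalForm₃))⟩
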